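/- Let k ≥ 1, n ≥ 1, and let X be a C^k vector field defined on a neighborhood of 0 in ℝ^n with X(0) = 0 and DX(0) invertible. Then for every sufficiently small ε > 0 (in particular so small that X(x) ≠ 0 for 0 < ‖x‖ < ε): (i) the map (s,u) ↦ X(s·u)/‖X(s·u)‖, defined on (0,ε)×S^{n−1}, extends to a C^{k−1} map on (−ε,ε)×S^{n−1} whose value at (0,u) is DX(0)·u/‖DX(0)·u‖; (ii) the function (s,u) ↦ ‖X(s·u)‖/s, defined on (0,ε)×S^{n−1}, extends to a positive C^{k−1} function on (−ε,ε)×S^{n−1} whose value at (0,u) is ‖DX(0)·u‖; (iii) the map (s,u) ↦ s·u/‖X(s·u)‖, defined on (0,ε)×S^{n−1}, extends to a C^{k−1} map on (−ε,ε)×S^{n−1} whose value at (0,u) is u/‖DX(0)·u‖. -/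

import Mathlib

/-!
Hadamard's lemma along rays: once `X` is replaced by a globally `C^k` field agreeing with it
near `0`, `X (s • u) = s • G (s, u)` with `G (s, u) = ∫₀¹ DX(t s u) u dt`, which is `C^(k-1)` by
differentiation under the integral sign and has `G (0, u) = DX(0) u ≠ 0`. By compactness of the
sphere, `G` does not vanish on `(-ε, ε) × S^(n-1)` for small `ε`, and the three extensions are
`G / ‖G‖`, `‖G‖` and `u / ‖G‖`.
-/

noncomputable section

open Set Metric Filter Topology

universe u

theorem exists_eventually_forall_norm_le_of_continuous {X Y G : Type*} [TopologicalSpace X]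
    [TopologicalSpace Y] [NormedAddCommGroup G] {f : X → Y → G}
    (hf : Continuous (Function.uncurry f)) {K : Set Y} (hK : IsCompact K) (p₀ : X) :
    ∃ C, ∀ᶠ p in 𝓝 p₀, ∀ t ∈ K, ‖f p t‖ ≤ C := by
  obtain ⟨C, hC⟩ := hK.exists_bound_of_continuousOn
    (hf.comp (Continuous.prodMk_right p₀)).continuousOn
  refine ⟨C + 1, hK.eventually_forall_of_forall_eventually fun t ht => ?_⟩
  have hlt : ‖Function.uncurry f (p₀, t)‖ < C + 1 := (hC t ht).trans_lt (lt_add_one C)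
  filter_upwards [hf.norm.continuousAt.eventually_lt continuousAt_const hlt] with z hz
  exact hz.le

section ParametricIntegral

variable {P : Type u} [NormedAddCommGroup P] [NormedSpace ℝ P]

theorem hasFDerivAt_parametric_intervalIntegral {F : Type*} [NormedAddCommGroup F]
    [NormedSpace ℝ F] {φ : P → ℝ → F} {ψ : P → ℝ → P →L[ℝ] F}
    (hφ : Continuous (Function.uncurry φ)) (hψ : Continuous (Function.uncurry ψ))
    (hφψ : ∀ p t, HasFDerivAt (φ · t) (ψ p t) p) (a b : ℝ) (p₀ : P) :
    HasFDerivAt (fun p => ∫ t in a..b, φ p t) (∫ t in a..b, ψ p₀ t) p₀ := by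
  obtain ⟨C, hC⟩ := exists_eventually_forall_norm_le_of_continuous hψ isCompact_uIcc p₀
  obtain ⟨r, hr, hball⟩ := eventually_nhds_iff_ball.1 hC
  have hslice : ∀ p, Continuous (φ p) := fun p => hφ.comp (Continuous.prodMk_right p)
  refine intervalIntegral.hasFDerivAt_integral_of_dominated_of_fderiv_le (bound := fun _ => C)
    (ball_mem_nhds p₀ hr) (Eventually.of_forall fun p => (hslice p).aestronglyMeasurable)
    ((hslice p₀).intervalIntegrable _ _)
    (hψ.comp (Continuous.prodMk_right p₀)).aestronglyMeasurable
    (Eventually.of_forall fun t ht p hp => hball p hp t (uIoc_subset_uIcc ht))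
    intervalIntegrable_const (Eventually.of_forall fun t _ p _ => hφψ p t)

-- `F` shares the universe of `P` so that the induction can pass to `P →L[ℝ] F`.
theorem contDiff_parametric_intervalIntegral (m : ℕ) {F : Type u} [NormedAddCommGroup F]
    [NormedSpace ℝ F] [CompleteSpace F] {φ : P → ℝ → F}
    (hφ : ContDiff ℝ m (Function.uncurry φ)) (a b : ℝ) :
    ContDiff ℝ m fun p => ∫ t in a..b, φ p t := by
  induction m generalizing F with
  | zero =>
    rw [Nat.cast_zero, contDiff_zero] at hφ ⊢
    exact intervalIntegral.continuous_parametric_intervalIntegral_of_continuous' hφ a b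
  | succ m ih =>
    set ψ : P → ℝ → P →L[ℝ] F := fun p t =>
      (fderiv ℝ (Function.uncurry φ) (p, t)).comp (ContinuousLinearMap.inl ℝ P ℝ)
    have hψ : ContDiff ℝ m (Function.uncurry ψ) :=
      (hφ.fderiv_right (by push_cast; rfl)).clm_comp contDiff_const
    have hφψ : ∀ p t, HasFDerivAt (φ · t) (ψ p t) p := fun p t =>
      ((hφ.differentiable (by simp)).differentiableAt.hasFDerivAt).comp p
        (hasFDerivAt_prodMk_left p t)
    rw [Nat.cast_add, Nat.cast_one, contDiff_succ_iff_hasFDerivAt]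
    exact ⟨_, ih hψ, hasFDerivAt_parametric_intervalIntegral hφ.continuous hψ.continuous hφψ a b⟩

end ParametricIntegral

theorem exists_contDiff_eventuallyEq {E F : Type*} [NormedAddCommGroup E] [NormedSpace ℝ E]
    [HasContDiffBump E] [NormedAddCommGroup F] [NormedSpace ℝ F] {n : ℕ∞} {f : E → F}
    {U : Set E} {x : E} (hf : ContDiffOn ℝ n f U) (hU : U ∈ 𝓝 x) :
    ∃ g : E → F, ContDiff ℝ n g ∧ g =ᶠ[𝓝 x] f := by
  obtain ⟨r, hr, hrU⟩ := Metric.mem_nhds_iff.1 hU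
  let χ : ContDiffBump x := ⟨r / 4, r / 2, by positivity, by linarith⟩
  refine ⟨fun y => χ y • f y, contDiff_iff_contDiffAt.2 fun y => ?_, ?_⟩
  · by_cases hy : y ∈ ball x r
    · exact χ.contDiff.contDiffAt.smul
        (hf.contDiffAt (mem_of_superset (isOpen_ball.mem_nhds hy) hrU))
    · have hχ : y ∉ tsupport χ := by
        rw [χ.tsupport_eq]
        exact fun h => hy (closedBall_subset_ball (show r / 2 < r by linarith) h)
      refine (contDiffAt_const (c := (0 : F))).congr_of_eventuallyEq ?_
      filter_upwards [notMem_tsupport_iff_eventuallyEq.1 hχ] with z hz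
      simp [hz]
  · filter_upwards [closedBall_mem_nhds x (by positivity : 0 < r / 4)] with y hy
    simp [χ.one_of_mem_closedBall hy]

def hadamardQuotient {E F : Type*} [NormedAddCommGroup E] [NormedSpace ℝ E]
    [NormedAddCommGroup F] [NormedSpace ℝ F] (f : E → F) (p : ℝ × E) : F :=
  ∫ t in (0 : ℝ)..1, fderiv ℝ f ((t * p.1) • p.2) p.2

section Hadamard

variable {E F : Type u} [NormedAddCommGroup E] [NormedSpace ℝ E]
  [NormedAddCommGroup F] [NormedSpace ℝ F] [CompleteSpace F] {f : E → F}

theorem hadamardQuotient_zero_left (f : E → F) (u : E) :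
    hadamardQuotient f (0, u) = fderiv ℝ f 0 u := by
  simp [hadamardQuotient]

theorem contDiff_hadamardQuotient {m : ℕ} (hf : ContDiff ℝ (m + 1) f) :
    ContDiff ℝ m (hadamardQuotient f) := by
  refine contDiff_parametric_intervalIntegral m ?_ 0 1
  exact ((hf.fderiv_right le_rfl).comp (by fun_prop)).clm_apply (by fun_prop)

theorem sub_eq_smul_hadamardQuotient (hf : ContDiff ℝ 1 f) (s : ℝ) (u : E) :
    f (s • u) - f 0 = s • hadamardQuotient f (s, u) := by
  have hderiv : ∀ t ∈ uIcc (0 : ℝ) 1, HasDerivAt (fun t : ℝ => f (t • s • u))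
      (s • fderiv ℝ f ((t * s) • u) u) t := by
    intro t _
    have := ((hf.differentiable one_ne_zero).differentiableAt (x := t • s • u)).hasFDerivAt
      |>.comp_hasDerivAt t ((hasDerivAt_id t).smul_const (s • u))
    simpa [mul_smul, Function.comp_def] using this
  have hcont : Continuous fun t : ℝ => s • fderiv ℝ f ((t * s) • u) u :=
    (((hf.continuous_fderiv one_ne_zero).comp (by fun_prop)).clm_apply
      continuous_const).const_smul s
  rw [hadamardQuotient, ← intervalIntegral.integral_smul,
    intervalIntegral.integral_eq_sub_of_hasDerivAt hderiv (hcont.intervalIntegrable 0 1)]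
  simp

theorem exists_contDiff_factor_along_rays [HasContDiffBump E] {m : ℕ} {U : Set E}
    (hf : ContDiffOn ℝ (m + 1) f U) (hU : U ∈ 𝓝 0) (hf0 : f 0 = 0) :
    ∃ ρ > 0, ∃ G : ℝ × E → F, ContDiff ℝ m G ∧ (∀ u, G (0, u) = fderiv ℝ f 0 u) ∧
      ∀ s u, ‖s • u‖ < ρ → f (s • u) = s • G (s, u) := by
  obtain ⟨g, hg, hgf⟩ := exists_contDiff_eventuallyEq (n := m + 1) hf hU
  obtain ⟨ρ, hρ, hρgf⟩ := eventually_nhds_iff_ball.1 hgf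
  refine ⟨ρ, hρ, hadamardQuotient g, contDiff_hadamardQuotient (by exact_mod_cast hg),
    fun u => by rw [hadamardQuotient_zero_left, hgf.fderiv_eq], fun s u hsu => ?_⟩
  have hg1 : ContDiff ℝ 1 g := hg.of_le (by exact_mod_cast le_add_self)
  rw [← hρgf _ (mem_ball_zero_iff.2 hsu), ← sub_eq_smul_hadamardQuotient hg1,
    hρgf 0 (mem_ball_self hρ), hf0, sub_zero]

theorem exists_factor_along_rays_ne_zero [FiniteDimensional ℝ E] {m : ℕ} {U : Set E}
    (hf : ContDiffOn ℝ (m + 1) f U) (hU : U ∈ 𝓝 0) (hf0 : f 0 = 0)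
    (hinj : Function.Injective (fderiv ℝ f 0)) :
    ∃ ε₀ > 0, ∃ G : ℝ × E → F, ContDiff ℝ m G ∧ (∀ u, G (0, u) = fderiv ℝ f 0 u) ∧
      ∀ p ∈ Ioo (-ε₀) ε₀ ×ˢ sphere (0 : E) 1, G p ≠ 0 ∧ f (p.1 • p.2) = p.1 • G p := by
  obtain ⟨ρ, hρ, G, hG, hG0, hfG⟩ := exists_contDiff_factor_along_rays hf hU hf0
  have hGne : ∀ᶠ s in 𝓝 (0 : ℝ), ∀ u ∈ sphere (0 : E) 1, G (s, u) ≠ 0 :=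
    (isCompact_sphere 0 1).eventually_forall_of_forall_eventually fun u hu =>
      hG.continuous.continuousAt.eventually_ne <| by
        rw [hG0]
        exact hinj.ne (ne_zero_of_mem_sphere one_ne_zero ⟨u, hu⟩) |>.trans_eq (map_zero _)
  obtain ⟨δ, hδ, hδG⟩ := eventually_nhds_iff_ball.1 hGne
  refine ⟨min δ ρ, lt_min hδ hρ, G, hG, hG0, fun ⟨s, u⟩ ⟨hs, hu⟩ => ?_⟩
  have hs' : |s| < min δ ρ := abs_lt.2 hs
  refine ⟨hδG s (mem_ball_zero_iff.2 (hs'.trans_le (min_le_left δ ρ))) u hu, hfG s u ?_⟩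
  rw [norm_smul, mem_sphere_zero_iff_norm.1 hu, mul_one, Real.norm_eq_abs]
  exact hs'.trans_le (min_le_right δ ρ)

end Hadamard

theorem inv_norm_smul_smul_of_pos {E : Type*} [NormedAddCommGroup E] [NormedSpace ℝ E]
    {s : ℝ} (hs : 0 < s) (v w : E) : ‖s • v‖⁻¹ • s • w = ‖v‖⁻¹ • w := by
  rw [norm_smul, Real.norm_of_nonneg hs.le, smul_smul, mul_inv, mul_right_comm,
    inv_mul_cancel₀ hs.ne', one_mul]

theorem statement7_general {n k : ℕ} (hk : 1 ≤ k)
    (X : EuclideanSpace ℝ (Fin n) → EuclideanSpace ℝ (Fin n))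
    (U : Set (EuclideanSpace ℝ (Fin n))) (hU : IsOpen U)
    (h0U : (0 : EuclideanSpace ℝ (Fin n)) ∈ U)
    (hX : ContDiffOn ℝ k X U) (hX0 : X 0 = 0)
    (hDX : Function.Bijective (fderiv ℝ X 0)) :
    ∃ ε₀ > 0, ∀ ε : ℝ, 0 < ε → ε ≤ ε₀ →
      (∀ x : EuclideanSpace ℝ (Fin n), 0 < ‖x‖ → ‖x‖ < ε → X x ≠ 0) ∧
      -- (i)
      (∃ (O : Set (ℝ × EuclideanSpace ℝ (Fin n)))
         (g : ℝ × EuclideanSpace ℝ (Fin n) → EuclideanSpace ℝ (Fin n)),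
        IsOpen O ∧
        Set.Ioo (-ε) ε ×ˢ sphere (0 : EuclideanSpace ℝ (Fin n)) 1 ⊆ O ∧
        ContDiffOn ℝ (k - 1) g O ∧
        (∀ s ∈ Set.Ioo (0:ℝ) ε, ∀ u ∈ sphere (0 : EuclideanSpace ℝ (Fin n)) 1,
          g (s, u) = ‖X (s • u)‖⁻¹ • X (s • u)) ∧
        (∀ u ∈ sphere (0 : EuclideanSpace ℝ (Fin n)) 1,
          g (0, u) = ‖fderiv ℝ X 0 u‖⁻¹ • fderiv ℝ X 0 u)) ∧
      -- (ii)
      (∃ (O : Set (ℝ × EuclideanSpace ℝ (Fin n)))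
         (g : ℝ × EuclideanSpace ℝ (Fin n) → ℝ),
        IsOpen O ∧
        Set.Ioo (-ε) ε ×ˢ sphere (0 : EuclideanSpace ℝ (Fin n)) 1 ⊆ O ∧
        ContDiffOn ℝ (k - 1) g O ∧
        (∀ p ∈ Set.Ioo (-ε) ε ×ˢ sphere (0 : EuclideanSpace ℝ (Fin n)) 1, 0 < g p) ∧
        (∀ s ∈ Set.Ioo (0:ℝ) ε, ∀ u ∈ sphere (0 : EuclideanSpace ℝ (Fin n)) 1,
          g (s, u) = ‖X (s • u)‖ / s) ∧
        (∀ u ∈ sphere (0 : EuclideanSpace ℝ (Fin n)) 1,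
          g (0, u) = ‖fderiv ℝ X 0 u‖)) ∧
      -- (iii)
      (∃ (O : Set (ℝ × EuclideanSpace ℝ (Fin n)))
         (g : ℝ × EuclideanSpace ℝ (Fin n) → EuclideanSpace ℝ (Fin n)),
        IsOpen O ∧
        Set.Ioo (-ε) ε ×ˢ sphere (0 : EuclideanSpace ℝ (Fin n)) 1 ⊆ O ∧
        ContDiffOn ℝ (k - 1) g O ∧
        (∀ s ∈ Set.Ioo (0:ℝ) ε, ∀ u ∈ sphere (0 : EuclideanSpace ℝ (Fin n)) 1,
          g (s, u) = ‖X (s • u)‖⁻¹ • (s • u)) ∧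
        (∀ u ∈ sphere (0 : EuclideanSpace ℝ (Fin n)) 1,
          g (0, u) = ‖fderiv ℝ X 0 u‖⁻¹ • u)) := by
  obtain ⟨m, rfl⟩ : ∃ m, k = m + 1 := ⟨k - 1, by omega⟩
  obtain ⟨ε₀, hε₀, G, hG, hG0, hGray⟩ := exists_factor_along_rays_ne_zero
    (by exact_mod_cast hX) (hU.mem_nhds h0U) hX0 hDX.injective
  refine ⟨ε₀, hε₀, fun ε hε hεle => ?_⟩
  set O := {p | G p ≠ 0}
  have hray : ∀ p ∈ Ioo (-ε) ε ×ˢ sphere (0 : EuclideanSpace ℝ (Fin n)) 1,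
      G p ≠ 0 ∧ X (p.1 • p.2) = p.1 • G p :=
    fun p hp => hGray p (prod_mono (Ioo_subset_Ioo (neg_le_neg hεle) hεle) le_rfl hp)
  have hsub : Ioo (-ε) ε ×ˢ sphere (0 : EuclideanSpace ℝ (Fin n)) 1 ⊆ O := fun p hp => (hray p hp).1
  have hXray : ∀ s ∈ Ioo (0 : ℝ) ε, ∀ u ∈ sphere (0 : EuclideanSpace ℝ (Fin n)) 1,
      X (s • u) = s • G (s, u) := fun s hs u hu => (hray (s, u) ⟨⟨by linarith [hs.1], hs.2⟩, hu⟩).2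
  have hO : IsOpen O := isOpen_ne_fun hG.continuous continuous_const
  have hGO : ContDiffOn ℝ m G O := hG.contDiffOn
  have hnormO : ContDiffOn ℝ m (fun p => ‖G p‖⁻¹) O :=
    (hGO.norm ℝ fun p hp => hp).inv fun p hp => norm_ne_zero_iff.2 hp
  rw [show ((m + 1 : ℕ) : WithTop ℕ∞) - 1 = m by norm_cast]
  refine ⟨fun x hx hxε => ?_, ⟨O, fun p => ‖G p‖⁻¹ • G p, hO, hsub, hnormO.smul hGO, ?_, ?_⟩,
    ⟨O, fun p => ‖G p‖, hO, hsub, hGO.norm ℝ fun p hp => hp, ?_, ?_, ?_⟩,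
    ⟨O, fun p => ‖G p‖⁻¹ • p.2, hO, hsub, hnormO.smul contDiffOn_snd, ?_, ?_⟩⟩
  · have hu : ‖x‖⁻¹ • x ∈ sphere (0 : EuclideanSpace ℝ (Fin n)) 1 :=
      mem_sphere_zero_iff_norm.2 (norm_smul_inv_norm (norm_pos_iff.1 hx))
    have hGx := hray (‖x‖, _) ⟨⟨by linarith, hxε⟩, hu⟩
    rw [← smul_inv_smul₀ hx.ne' x, hGx.2]
    exact smul_ne_zero hx.ne' hGx.1
  · exact fun s hs u hu => by rw [hXray s hs u hu, inv_norm_smul_smul_of_pos hs.1]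
  · exact fun u _ => by simp only [hG0]
  · exact fun p hp => norm_pos_iff.2 (hsub hp)
  · exact fun s hs u hu => by
      rw [hXray s hs u hu, norm_smul, Real.norm_of_nonneg hs.1.le, mul_div_cancel_left₀ _ hs.1.ne']
  · exact fun u _ => by simp only [hG0]
  · exact fun s hs u hu => by rw [hXray s hs u hu, inv_norm_smul_smul_of_pos hs.1]
  · exact fun u _ => by simp only [hG0]

/-- Proposition 2.2 of the paper: let `X` be a `C^k` vector field on a
neighborhood of `0` in `ℝ^n` with `X(0) = 0` and `DX(0)` invertible. Then for every
sufficiently small `ε > 0` (in particular with `X` non-vanishing on the punctured ball):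
(i) `(s,u) ↦ X(s·u)/‖X(s·u)‖`, (ii) `(s,u) ↦ ‖X(s·u)‖/s` and
(iii) `(s,u) ↦ s·u/‖X(s·u)‖`, defined on `(0,ε) × S^{n−1}`, extend to `C^{k−1}` maps on
`(−ε,ε) × S^{n−1}` with values `DX(0)u/‖DX(0)u‖`, `‖DX(0)u‖` and `u/‖DX(0)u‖` at
`(0,u)` respectively. -/
theorem statement7 {n k : ℕ} (hk : 1 ≤ k) (hn : 1 ≤ n)
    (X : EuclideanSpace ℝ (Fin n) → EuclideanSpace ℝ (Fin n))
    (U : Set (EuclideanSpace ℝ (Fin n))) (hU : IsOpen U)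
    (h0U : (0 : EuclideanSpace ℝ (Fin n)) ∈ U)
    (hX : ContDiffOn ℝ k X U) (hX0 : X 0 = 0)
    (hDX : Function.Bijective (fderiv ℝ X 0)) :
    ∃ ε₀ > 0, ∀ ε : ℝ, 0 < ε → ε ≤ ε₀ →
      (∀ x : EuclideanSpace ℝ (Fin n), 0 < ‖x‖ → ‖x‖ < ε → X x ≠ 0) ∧
      -- (i)
      (∃ (O : Set (ℝ × EuclideanSpace ℝ (Fin n)))
         (g : ℝ × EuclideanSpace ℝ (Fin n) → EuclideanSpace ℝ (Fin n)),
        IsOpen O ∧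
        Set.Ioo (-ε) ε ×ˢ sphere (0 : EuclideanSpace ℝ (Fin n)) 1 ⊆ O ∧
        ContDiffOn ℝ (k - 1) g O ∧
        (∀ s ∈ Set.Ioo (0:ℝ) ε, ∀ u ∈ sphere (0 : EuclideanSpace ℝ (Fin n)) 1,
          g (s, u) = ‖X (s • u)‖⁻¹ • X (s • u)) ∧
        (∀ u ∈ sphere (0 : EuclideanSpace ℝ (Fin n)) 1,
          g (0, u) = ‖fderiv ℝ X 0 u‖⁻¹ • fderiv ℝ X 0 u)) ∧
      -- (ii)
      (∃ (O : Set (ℝ × EuclideanSpace ℝ (Fin n)))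
         (g : ℝ × EuclideanSpace ℝ (Fin n) → ℝ),
        IsOpen O ∧
        Set.Ioo (-ε) ε ×ˢ sphere (0 : EuclideanSpace ℝ (Fin n)) 1 ⊆ O ∧
        ContDiffOn ℝ (k - 1) g O ∧
        (∀ p ∈ Set.Ioo (-ε) ε ×ˢ sphere (0 : EuclideanSpace ℝ (Fin n)) 1, 0 < g p) ∧
        (∀ s ∈ Set.Ioo (0:ℝ) ε, ∀ u ∈ sphere (0 : EuclideanSpace ℝ (Fin n)) 1,
          g (s, u) = ‖X (s • u)‖ / s) ∧
        (∀ u ∈ sphere (0 : EuclideanSpace ℝ (Fin n)) 1,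
          g (0, u) = ‖fderiv ℝ X 0 u‖)) ∧
      -- (iii)
      (∃ (O : Set (ℝ × EuclideanSpace ℝ (Fin n)))
         (g : ℝ × EuclideanSpace ℝ (Fin n) → EuclideanSpace ℝ (Fin n)),
        IsOpen O ∧
        Set.Ioo (-ε) ε ×ˢ sphere (0 : EuclideanSpace ℝ (Fin n)) 1 ⊆ O ∧
        ContDiffOn ℝ (k - 1) g O ∧
        (∀ s ∈ Set.Ioo (0:ℝ) ε, ∀ u ∈ sphere (0 : EuclideanSpace ℝ (Fin n)) 1,
          g (s, u) = ‖X (s • u)‖⁻¹ • (s • u)) ∧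
        (∀ u ∈ sphere (0 : EuclideanSpace ℝ (Fin n)) 1,
          g (0, u) = ‖fderiv ℝ X 0 u‖⁻¹ • u)) :=
  statement7_general hk X U hU h0U hX hX0 hDX
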